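/- arXiv:0902.1650 — 8 statements merged into one kernel-verified Lean document; each statement's English description precedes it below -/
import Mathlib

section
/- For sequences s, t : ℕ → ℂ, define a : ℕ → ℕ → ℂ by a(0,k) = 1 if k = 0 and 0 otherwise, a(n,0) = s(0)·a(n-1,0) + t(0)·a(n-1,1), and for k ≥ 1, a(n,k) = a(n-1,k-1) + s(k)·a(n-1,k) + t(k)·a(n-1,k+1). Then for all m, n ∈ ℕ, ∑_{k=0}^{m+n} a(n,k)·a(m,k)·∏_{j=0}^{k-1} t(j) = a(m+n, 0). -/
theorem stmt_0 (s t : ℕ → ℂ) (a : ℕ → ℕ → ℂ)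
    (h0 : ∀ k, a 0 k = if k = 0 then 1 else 0)
    (h1 : ∀ n, a (n + 1) 0 = s 0 * a n 0 + t 0 * a n 1)
    (h2 : ∀ n k, a (n + 1) (k + 1) = a n k + s (k + 1) * a n (k + 1) + t (k + 1) * a n (k + 2)) :
    ∀ m n : ℕ,
      ∑ k ∈ Finset.range (m + n + 1), a n k * a m k * ∏ j ∈ Finset.range k, t j
        = a (m + n) 0 := by
  have hz : ∀ n k, n < k → a n k = 0 := by
    intro n
    induction n with
    | zero =>
      intro k hk
      rw [h0, if_neg (by omega)]
    | succ n ih =>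
      intro k hk
      obtain ⟨k, rfl⟩ : ∃ j, k = j + 1 := ⟨k - 1, by omega⟩
      rw [h2, ih k (by omega), ih (k+1) (by omega), ih (k+2) (by omega)]
      ring
  have key : ∀ p q M, q ≤ M →
      ∑ k ∈ Finset.range (M+1), a (p+1) k * a q k * ∏ j ∈ Finset.range k, t j
        = ∑ k ∈ Finset.range (M+1),
            (s k * a p k * a q k + t k * a p (k+1) * a q k + t k * a p k * a q (k+1))
              * ∏ j ∈ Finset.range k, t j := by
    intro p q M hq
    rw [Finset.sum_range_succ' _ M, Finset.sum_range_succ' _ M]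
    rw [eq_comm, ← sub_eq_zero]
    have hsplit : ∀ X Y Z W : ℂ, (X + Y) - (Z + W) = (X - Z) + (Y - W) := by
      intros; ring
    rw [hsplit, ← Finset.sum_sub_distrib]
    have hterm : ∀ k ∈ Finset.range M,
        ((s (k+1) * a p (k+1) * a q (k+1) + t (k+1) * a p (k+2) * a q (k+1)
            + t (k+1) * a p (k+1) * a q (k+2)) * ∏ j ∈ Finset.range (k+1), t j)
          - a (p+1) (k+1) * a q (k+1) * ∏ j ∈ Finset.range (k+1), t j
        = (fun k => t k * a p k * a q (k+1) * ∏ j ∈ Finset.range k, t j) (k+1)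
          - (fun k => t k * a p k * a q (k+1) * ∏ j ∈ Finset.range k, t j) k := by
      intro k _
      simp only [h2, Finset.prod_range_succ]
      ring
    rw [Finset.sum_congr rfl hterm,
      Finset.sum_range_sub (fun k => t k * a p k * a q (k+1) * ∏ j ∈ Finset.range k, t j) M]
    simp only [h1, Finset.prod_range_zero]
    rw [hz q (M+1) (by omega)]
    ring
  intro m n
  induction n generalizing m with
  | zero =>
    rw [show m + 0 + 1 = m + 1 from rfl, Finset.sum_range_succ' _ m]
    have hzero : ∀ k ∈ Finset.range m,
        a 0 (k+1) * a m (k+1) * ∏ j ∈ Finset.range (k+1), t j = 0 := by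
      intro k _
      rw [h0, if_neg (by omega)]
      ring
    rw [Finset.sum_congr rfl hzero, Finset.sum_const_zero, h0]
    simp
  | succ n ih =>
    have e2 : m + 1 + n = m + n + 1 := by omega
    have ih' := ih (m+1)
    rw [e2] at ih'
    calc ∑ k ∈ Finset.range (m + (n+1) + 1), a (n+1) k * a m k * ∏ j ∈ Finset.range k, t j
        = ∑ k ∈ Finset.range (m+n+1+1),
            (s k * a n k * a m k + t k * a n (k+1) * a m k + t k * a n k * a m (k+1))
              * ∏ j ∈ Finset.range k, t j := key n m (m+n+1) (by omega)
      _ = ∑ k ∈ Finset.range (m+n+1+1),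
            (s k * a m k * a n k + t k * a m (k+1) * a n k + t k * a m k * a n (k+1))
              * ∏ j ∈ Finset.range k, t j := by
          apply Finset.sum_congr rfl
          intro k _
          ring
      _ = ∑ k ∈ Finset.range (m+n+1+1), a (m+1) k * a n k * ∏ j ∈ Finset.range k, t j :=
          (key m n (m+n+1) (by omega)).symm
      _ = ∑ k ∈ Finset.range (m+n+1+1), a n k * a (m+1) k * ∏ j ∈ Finset.range k, t j := by
          apply Finset.sum_congr rfl
          intro k _
          ring
      _ = a (m + (n+1)) 0 := ih'
end

section
/- For sequences s, t : ℕ → ℂ, define a : ℕ → ℕ → ℂ by a(0,k) = [k=0], a(n,0) = s(0)·a(n-1,0) + t(0)·a(n-1,1), and for k ≥ 1, a(n,k) = a(n-1,k-1) + s(k)·a(n-1,k) + t(k)·a(n-1,k+1). Then the Hankel determinant det((a(i+j,0))_{i,j=0}^{n-1}) equals ∏_{i=1}^{n-1} ∏_{k=0}^{i-1} t(k). -/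
/-!
With weights `w k = t 0 ⋯ t (k - 1)`, the recurrence says that `a n k` is the `e_k`-coefficient
of `Jⁿ e_0` for the tridiagonal operator `J e_k = e_{k+1} + s k e_k + t (k - 1) e_{k-1}`, which is
self-adjoint for `⟨e_k, e_l⟩ = δ_{kl} w k`. Hence
`a (i + j) 0 = ⟨e_0, J^{i+j} e_0⟩ = ⟨Jⁱ e_0, Jʲ e_0⟩ = ∑ k, a i k * a j k * w k`,
i.e. the Hankel matrix is `L D Lᵀ` with `L = (a i k)` lower unitriangular and `D = diag w`,
so its determinant is `∏_{k < n} w k`.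
-/

open Finset

variable {R : Type*} [CommRing R]

theorem sum_range_shift_mul_prod_range (f g t : ℕ → R) (M : ℕ) (hM : f M * g (M + 1) = 0) :
    ∑ k ∈ range (M + 1), (if k = 0 then 0 else f (k - 1)) * g k * ∏ h ∈ range k, t h
      = ∑ k ∈ range (M + 1), f k * t k * g (k + 1) * ∏ h ∈ range k, t h := by
  rw [sum_range_succ', sum_range_succ]
  have hboundary : f M * t M * g (M + 1) * ∏ h ∈ range M, t h = 0 := by
    linear_combination (t M * ∏ h ∈ range M, t h) * hM
  simp only [hboundary, add_zero, if_pos, Nat.add_one_ne_zero, if_false, Nat.add_sub_cancel,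
    zero_mul, prod_range_succ]
  exact sum_congr rfl fun k _ => by ring

theorem prod_range_eq_prod_Icc_one_of_apply_zero {M : Type*} [CommMonoid M] (f : ℕ → M)
    (hf : f 0 = 1) (n : ℕ) : ∏ k ∈ range n, f k = ∏ k ∈ Icc 1 (n - 1), f k := by
  cases n with
  | zero => simp
  | succ m =>
    rw [← Ico_add_one_right_eq_Icc, prod_Ico_eq_prod_range, prod_range_succ', hf, mul_one]
    simp [add_comm]

/-- `a n k` is the total weight of the Motzkin paths of length `n` from height `0` to height `k`,
where a level step at height `k` has weight `s k` and a down-step from `k + 1` has weight `t k`. -/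
structure IsMotzkinArray (s t : ℕ → R) (a : ℕ → ℕ → R) : Prop where
  zero : ∀ k, a 0 k = if k = 0 then 1 else 0
  succ_zero : ∀ n, a (n + 1) 0 = s 0 * a n 0 + t 0 * a n 1
  succ_succ : ∀ n k, a (n + 1) (k + 1) = a n k + s (k + 1) * a n (k + 1) + t (k + 1) * a n (k + 2)

namespace IsMotzkinArray

variable {s t : ℕ → R} {a : ℕ → ℕ → R}

theorem eq_zero_of_lt {m k : ℕ} (ha : IsMotzkinArray s t a) (h : m < k) : a m k = 0 := by
  induction m generalizing k with
  | zero => rw [ha.zero, if_neg (by omega)]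
  | succ m ih =>
    obtain ⟨k, rfl⟩ : ∃ k', k = k' + 1 := ⟨k - 1, by omega⟩
    rw [ha.succ_succ, ih (by omega), ih (by omega), ih (by omega)]
    ring

theorem apply_self (ha : IsMotzkinArray s t a) (m : ℕ) : a m m = 1 := by
  induction m with
  | zero => simp [ha.zero]
  | succ m ih =>
    rw [ha.succ_succ, ih, ha.eq_zero_of_lt (by omega), ha.eq_zero_of_lt (by omega)]
    ring

theorem succ_apply (ha : IsMotzkinArray s t a) (m k : ℕ) :
    a (m + 1) k = (if k = 0 then 0 else a m (k - 1)) + s k * a m k + t k * a m (k + 1) := by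
  cases k with
  | zero => simpa using ha.succ_zero m
  | succ k => simpa using ha.succ_succ m k

theorem sum_succ_left_eq_sum_succ_right {N i : ℕ} (ha : IsMotzkinArray s t a) (hi : i + 1 < N)
    (j : ℕ) :
    ∑ k ∈ range N, a (i + 1) k * a j k * ∏ h ∈ range k, t h
      = ∑ k ∈ range N, a i k * a (j + 1) k * ∏ h ∈ range k, t h := by
  obtain ⟨M, rfl⟩ : ∃ M, N = M + 1 := ⟨N - 1, by omega⟩
  have hup := sum_range_shift_mul_prod_range (a i) (a j) t M
    (by rw [ha.eq_zero_of_lt (by omega), zero_mul])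
  have hdown := sum_range_shift_mul_prod_range (a j) (a i) t M
    (by rw [ha.eq_zero_of_lt (k := M + 1) (by omega), mul_zero])
  have hterm : ∀ k, a (i + 1) k * a j k * ∏ h ∈ range k, t h
        - a i k * a (j + 1) k * ∏ h ∈ range k, t h
      = ((if k = 0 then 0 else a i (k - 1)) * a j k * ∏ h ∈ range k, t h
          - a i k * t k * a j (k + 1) * ∏ h ∈ range k, t h)
        - ((if k = 0 then 0 else a j (k - 1)) * a i k * ∏ h ∈ range k, t h
          - a j k * t k * a i (k + 1) * ∏ h ∈ range k, t h) := fun k => by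
    rw [ha.succ_apply, ha.succ_apply]
    ring
  rw [← sub_eq_zero, ← sum_sub_distrib, sum_congr rfl fun k _ => hterm k, sum_sub_distrib,
    sum_sub_distrib, sum_sub_distrib, hup, hdown, sub_self, sub_self, sub_zero]

theorem sum_range_mul_mul_prod_eq {N i : ℕ} (ha : IsMotzkinArray s t a) (hi : i < N) (j : ℕ) :
    ∑ k ∈ range N, a i k * a j k * ∏ h ∈ range k, t h = a (i + j) 0 := by
  induction i generalizing j with
  | zero => simp [ha.zero, hi]
  | succ i ih =>
    rw [ha.sum_succ_left_eq_sum_succ_right hi, ih (by omega), Nat.add_right_comm, add_assoc]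

theorem hankel_eq_mul_diagonal_mul_transpose (ha : IsMotzkinArray s t a) (n : ℕ) :
    Matrix.of (fun i j : Fin n => a (i.1 + j.1) 0)
      = Matrix.of (fun i k : Fin n => a i k)
        * Matrix.diagonal (fun k : Fin n => ∏ h ∈ range k, t h)
        * (Matrix.of (fun i k : Fin n => a i k)).transpose := by
  ext i j
  rw [Matrix.of_apply, Matrix.mul_apply, ← ha.sum_range_mul_mul_prod_eq i.isLt j,
    ← Fin.sum_univ_eq_sum_range]
  simp [Matrix.mul_diagonal, mul_right_comm]

theorem det_hankel (ha : IsMotzkinArray s t a) (n : ℕ) :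
    (Matrix.of (fun i j : Fin n => a (i.1 + j.1) 0)).det
      = ∏ k ∈ range n, ∏ h ∈ range k, t h := by
  have hL : (Matrix.of (fun i k : Fin n => a i k)).det = 1 := by
    have hlower : (Matrix.of (fun i k : Fin n => a i k)).IsLowerTriangular :=
      fun i k (hik : i < k) => ha.eq_zero_of_lt hik
    rw [Matrix.det_of_isLowerTriangular _ hlower]
    simp [ha.apply_self]
  rw [ha.hankel_eq_mul_diagonal_mul_transpose, Matrix.det_mul, Matrix.det_mul,
    Matrix.det_transpose, hL, Matrix.det_diagonal, one_mul, mul_one,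
    Fin.prod_univ_eq_prod_range (fun k => ∏ h ∈ range k, t h)]

end IsMotzkinArray

theorem stmt_1 (s t : ℕ → ℂ) (a : ℕ → ℕ → ℂ)
    (h0 : ∀ k, a 0 k = if k = 0 then 1 else 0)
    (h1 : ∀ n, a (n + 1) 0 = s 0 * a n 0 + t 0 * a n 1)
    (h2 : ∀ n k, a (n + 1) (k + 1) = a n k + s (k + 1) * a n (k + 1) + t (k + 1) * a n (k + 2))
    (n : ℕ) :
    Matrix.det (Matrix.of (fun i j : Fin n => a (i.1 + j.1) 0))
      = ∏ i ∈ Finset.Icc 1 (n - 1), ∏ k ∈ Finset.range i, t k := by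
  rw [IsMotzkinArray.det_hankel ⟨h0, h1, h2⟩]
  exact prod_range_eq_prod_Icc_one_of_apply_zero _ (prod_range_zero t) n
end

section
/- For a sequence T : ℕ → ℂ, define A : ℕ → ℕ → ℂ by A(0,k) = [k=0], A(n,0) = T(0)·A(n-1,1), and for k ≥ 1, A(n,k) = A(n-1,k-1) + T(k)·A(n-1,k+1). Define a(n,k) = A(2n,2k). Then a satisfies the recurrence a(0,k) = [k=0], a(n,0) = s(0)·a(n-1,0) + t(0)·a(n-1,1), and a(n,k) = a(n-1,k-1) + s(k)·a(n-1,k) + t(k)·a(n-1,k+1) for k ≥ 1, where s(0) = T(0), s(n) = T(2n-1) + T(2n) for n ≥ 1, and t(n) = T(2n)·T(2n+1). -/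
theorem stmt_3 (T : ℕ → ℂ) (A : ℕ → ℕ → ℂ)
    (h0 : ∀ k, A 0 k = if k = 0 then 1 else 0)
    (h1 : ∀ n, A (n + 1) 0 = T 0 * A n 1)
    (h2 : ∀ n k, A (n + 1) (k + 1) = A n k + T (k + 1) * A n (k + 2))
    (a : ℕ → ℕ → ℂ) (ha : ∀ n k, a n k = A (2 * n) (2 * k))
    (s : ℕ → ℂ) (hs0 : s 0 = T 0) (hs : ∀ n, s (n + 1) = T (2 * (n + 1) - 1) + T (2 * (n + 1)))
    (t : ℕ → ℂ) (ht : ∀ n, t n = T (2 * n) * T (2 * n + 1)) :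
    (∀ k, a 0 k = if k = 0 then 1 else 0) ∧
    (∀ n, a (n + 1) 0 = s 0 * a n 0 + t 0 * a n 1) ∧
    (∀ n k, a (n + 1) (k + 1) = a n k + s (k + 1) * a n (k + 1) + t (k + 1) * a n (k + 2)) := by
  refine ⟨fun k => ?_, fun n => ?_, fun n k => ?_⟩
  · rw [ha, Nat.mul_zero, h0]
    simp
  · have e1 : 2 * (n + 1) = 2 * n + 1 + 1 := by ring
    have e0 : (0 : ℕ) + 1 = 0 + 1 := rfl
    rw [ha, ha, ha, e1, h1, show (1 : ℕ) = 0 + 1 from rfl, h2]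
    simp only [hs0, ht]
    ring_nf
  · have e1 : 2 * (n + 1) = 2 * n + 1 + 1 := by ring
    have e2 : 2 * (k + 1) = 2 * k + 1 + 1 := by ring
    rw [ha, ha, ha, ha, e1, e2, h2, show 2 * k + 1 = 2 * k + 1 from rfl,
      show (2 * k : ℕ) + 1 = 2 * k + 0 + 1 from rfl, h2,
      show (2 * k : ℕ) + 0 + 1 + 2 = 2 * k + 2 + 1 from rfl, h2,
      hs, ht]
    have : 2 * (k + 1) - 1 = 2 * k + 1 := by omega
    rw [this]
    ring_nf
end

section
/- The Hankel determinant of the Catalan numbers satisfies det((C_{i+j})_{i,j=0}^{n-1}) = 1 for all n ≥ 1, where C_m = C(2m, m)/(m+1) is the m-th Catalan number. -/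
/-!
Write `b(n, k) = C(2n, n + k) - C(2n, n + k + 1)` (ballot numbers). The rows `b(n, ·)` are
obtained from `b(0, ·) = e₀` by iterating a symmetric tridiagonal operator `T`, so
`∑ₖ b(i, k) b(j, k) = ⟨Tⁱ e₀, Tʲ e₀⟩ = ⟨e₀, Tⁱ⁺ʲ e₀⟩ = b(i + j, 0) = C_{i+j}`.
Hence the Hankel matrix is `L Lᵀ` with `L = (b(i, k))` lower unitriangular, and its determinant is `1`.
-/

open Finset
open scoped Matrix

/-- The infinite symmetric tridiagonal matrix with diagonal `1, 2, 2, …` and off-diagonals `1`,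
acting on sequences. -/
def tridiag (v : ℕ → ℤ) : ℕ → ℤ
  | 0 => v 0 + v 1
  | k + 1 => v k + 2 * v (k + 1) + v (k + 2)

theorem sum_range_tridiag_mul_comm (u v : ℕ → ℤ) {N : ℕ} (hN : u N = 0) (hN' : u (N + 1) = 0) :
    ∑ k ∈ range (N + 1), tridiag u k * v k = ∑ k ∈ range (N + 1), u k * tridiag v k := by
  set D : ℕ → ℤ := fun k => u k * v (k + 1) - u (k + 1) * v k
  have hstep (k : ℕ) :
      tridiag u (k + 1) * v (k + 1) - u (k + 1) * tridiag v (k + 1) = D k - D (k + 1) := by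
    simp only [tridiag, D]
    ring
  rw [sum_range_succ', sum_range_succ', ← sub_eq_zero, add_sub_add_comm, ← sum_sub_distrib,
    sum_congr rfl fun k _ => hstep k, sum_range_sub']
  simp only [D, tridiag, hN, hN']
  ring

def ballot (n k : ℕ) : ℤ := (2 * n).choose (n + k) - (2 * n).choose (n + k + 1)

theorem ballot_eq_zero_of_lt {n k : ℕ} (h : n < k) : ballot n k = 0 := by
  simp [ballot, Nat.choose_eq_zero_of_lt, show 2 * n < n + k by omega,
    show 2 * n < n + k + 1 by omega]

theorem ballot_self (n : ℕ) : ballot n n = 1 := by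
  simp [ballot, ← two_mul]

theorem catalan_eq_choose_sub_choose (n : ℕ) :
    (catalan n : ℤ) = (2 * n).choose n - (2 * n).choose (n + 1) := by
  have hcat : (n + 1) * catalan n = (2 * n).choose n := by
    rw [succ_mul_catalan_eq_centralBinom, Nat.centralBinom_eq_two_mul_choose]
  have hsucc := Nat.choose_succ_right_eq (2 * n) n
  rw [show 2 * n - n = n by omega] at hsucc
  apply mul_left_cancel₀ (show ((n : ℤ) + 1) ≠ 0 by positivity)
  have hcat' : ((n : ℤ) + 1) * catalan n = (2 * n).choose n := mod_cast hcat
  have hsucc' : ((2 * n).choose (n + 1) : ℤ) * (n + 1) = (2 * n).choose n * n := mod_cast hsucc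
  linear_combination hcat' + hsucc'

theorem choose_add_two_add_two (m r : ℕ) :
    ((m + 2).choose (r + 2) : ℤ) = m.choose r + 2 * m.choose (r + 1) + m.choose (r + 2) := by
  rw [Nat.choose_succ_succ (m + 1), Nat.choose_succ_succ m, Nat.choose_succ_succ m]
  push_cast
  ring

theorem tridiag_ballot (n : ℕ) : tridiag (ballot n) = ballot (n + 1) := by
  funext k
  rcases k with _ | k
  · rcases n with _ | m
    · simp [tridiag, ballot]
    have hsymm : ((2 * m + 2).choose m : ℤ) = (2 * m + 2).choose (m + 2) :=
      mod_cast Nat.choose_symm_of_eq_add (by ring)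
    have hm := choose_add_two_add_two (2 * m + 2) m
    have hm' := choose_add_two_add_two (2 * m + 2) (m + 1)
    show ballot (m + 1) 0 + ballot (m + 1) 1 = ballot (m + 2) 0
    simp only [ballot]
    ring_nf at hsymm hm hm' ⊢
    linear_combination hm' - hm - hsymm
  · simp only [tridiag, ballot]
    rw [show 2 * (n + 1) = 2 * n + 2 by ring, show n + 1 + (k + 1) = n + k + 2 by ring,
      show n + k + 2 + 1 = (n + k + 1) + 2 by ring, choose_add_two_add_two,
      choose_add_two_add_two]
    ring_nf

theorem sum_range_ballot_mul_ballot {i N : ℕ} (hi : i < N) (j : ℕ) :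
    ∑ k ∈ range N, ballot i k * ballot j k = catalan (i + j) := by
  induction i generalizing j N with
  | zero =>
    rw [sum_eq_single_of_mem 0 (mem_range.2 hi) fun k _ hk =>
      by rw [ballot_eq_zero_of_lt (Nat.pos_of_ne_zero hk), zero_mul]]
    rw [ballot_self, one_mul, zero_add, catalan_eq_choose_sub_choose, ballot, add_zero]
  | succ i ih =>
    obtain ⟨M, rfl⟩ : ∃ M, N = M + 1 := ⟨N - 1, by omega⟩
    rw [← tridiag_ballot, sum_range_tridiag_mul_comm _ _ (ballot_eq_zero_of_lt (by omega))
      (ballot_eq_zero_of_lt (by omega)), tridiag_ballot, ih (by omega),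
      Nat.add_right_comm i 1 j, add_assoc]

theorem stmt_8_general (n : ℕ) :
    Matrix.det (Matrix.of (fun i j : Fin n => (catalan (i.1 + j.1) : ℤ))) = 1 := by
  set L : Matrix (Fin n) (Fin n) ℤ := Matrix.of fun i k => ballot i k
  have hankel_eq : Matrix.of (fun i j : Fin n => (catalan (i.1 + j.1) : ℤ)) = L * Lᵀ := by
    ext i j
    rw [Matrix.of_apply, Matrix.mul_apply, ← sum_range_ballot_mul_ballot i.2 j,
      ← Fin.sum_univ_eq_sum_range]
    rfl
  have hL : L.det = 1 := by
    rw [Matrix.det_of_isLowerTriangular L fun i k hik => ballot_eq_zero_of_lt hik]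
    simp [L, ballot_self]
  rw [hankel_eq, Matrix.det_mul, Matrix.det_transpose, hL, one_mul]

theorem stmt_8 (n : ℕ) (hn : 1 ≤ n) :
    Matrix.det (Matrix.of (fun i j : Fin n => (catalan (i.1 + j.1) : ℤ))) = 1 :=
  stmt_8_general n
end

section
/- For all m, n ≥ 1, det((C_{i+j+m})_{i,j=0}^{n-1}) = ∏_{j=1}^{m-1} ∏_{i=1}^{j} (2n+i+j)/(i+j), where C_k denotes the k-th Catalan number. -/
/-!
By the Desnanot–Jacobi identity, the Hankel determinants `h n m = det (C_{i+j+m})_{i,j<n}` satisfy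
`h (n+2) m * h n (m+2) = h (n+1) (m+2) * h (n+1) m - h (n+1) (m+1) ^ 2`.
The product `F n m` on the right-hand side satisfies the same recurrence: the ratios
`F n (m+1) / F n m` and their quotients under `n ↦ n+1` are explicit rational functions of `n, m`,
so the recurrence becomes a rational-function identity. As `F 0 m = 1 = h 0 m`,
`F 1 m = C_m = h 1 m` and `F > 0`, induction on `n` gives `h n m = F n m`.

Desnanot–Jacobi itself: replacing the first and last rows of `M` by `det M • e₀` and
`det M • eₗ`, i.e. by the first and last rows of `adjugate M * M`, gives a matrix whose
determinant is `det M` times the `2 × 2` minor of `adjugate M` on those rows, and also, by a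
double Laplace expansion, `det M ^ 2` times the interior minor.
-/

open Finset

namespace Matrix

variable {R : Type*} [CommRing R]

section
variable {n : Type*} [Fintype n] [DecidableEq n]

theorem vecMul_eq_vecMul_updateRow_add (M : Matrix n n R) (j : n) (v y : n → R) :
    v ᵥ* M = v ᵥ* M.updateRow j y + v j • M j + (-v j) • y := by
  ext c
  simp only [vecMul, dotProduct, updateRow_apply, Pi.add_apply, Pi.smul_apply, smul_eq_mul,
    mul_ite, sum_ite, filter_eq', filter_ne', mem_univ, if_true, sum_singleton]
  rw [← add_sum_erase _ _ (mem_univ j)]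
  ring

theorem det_updateRow_vecMul (M : Matrix n n R) (i : n) (v : n → R) :
    (M.updateRow i (v ᵥ* M)).det = v i * M.det := by
  rw [vecMul_eq_sum, det_updateRow_sum, smul_eq_mul]

theorem det_updateRow_updateRow_row_eq_neg (M : Matrix n n R) {i j : n} (hij : i ≠ j)
    (r : n → R) :
    ((M.updateRow j r).updateRow i (M j)).det = -(M.updateRow i r).det := by
  have hswap : (M.updateRow j r).updateRow i (M j)
      = (M.updateRow i r).submatrix (Equiv.swap i j) id := by
    ext a b
    rcases eq_or_ne a i with rfl | hai
    · simp [hij.symm]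
    rcases eq_or_ne a j with rfl | haj
    · simp [hai]
    · simp [hai, haj, Equiv.swap_apply_of_ne_of_ne hai haj]
  rw [hswap, det_permute, Equiv.Perm.sign_swap hij]
  simp

theorem det_updateRow_vecMul_updateRow_vecMul (M : Matrix n n R) {i j : n} (hij : i ≠ j)
    (v w : n → R) :
    ((M.updateRow i (v ᵥ* M)).updateRow j (w ᵥ* M)).det = (v i * w j - v j * w i) * M.det := by
  have hrep : ((M.updateRow j (w ᵥ* M)).updateRow i (w ᵥ* M)).det = 0 :=
    det_zero_of_row_eq hij (by simp [hij.symm])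
  rw [updateRow_comm _ hij, vecMul_eq_vecMul_updateRow_add M j v (w ᵥ* M), det_updateRow_add,
    det_updateRow_add, det_updateRow_smul, det_updateRow_smul, hrep, det_updateRow_vecMul,
    det_updateRow_updateRow_row_eq_neg _ hij, det_updateRow_vecMul, det_updateRow_vecMul]
  ring

end

section Fin
variable {k : ℕ}

theorem det_updateRow_single (A : Matrix (Fin (k + 1)) (Fin (k + 1)) R) (i j : Fin (k + 1))
    (c : R) :
    (A.updateRow i (Pi.single j c)).det
      = (-1) ^ (i + j : ℕ) * c * (A.submatrix i.succAbove j.succAbove).det := by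
  rw [det_succ_row _ i, Fintype.sum_eq_single j fun j' hj' => by simp [hj']]
  simp [submatrix_updateRow_succAbove]

theorem adjugate_vecMul_self (M : Matrix (Fin k) (Fin k) R) (i : Fin k) :
    adjugate M i ᵥ* M = Pi.single i M.det := by
  ext j
  rw [← mul_apply_eq_vecMul, adjugate_mul]
  simp [one_apply, Pi.single_apply, eq_comm]

theorem det_updateRow_zero_updateRow_last_single (M : Matrix (Fin (k + 2)) (Fin (k + 2)) R)
    (a b : R) :
    ((M.updateRow 0 (Pi.single 0 a)).updateRow (Fin.last (k + 1))
        (Pi.single (Fin.last (k + 1)) b)).det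
      = a * b * (M.submatrix (Fin.succ ∘ Fin.castSucc) (Fin.succ ∘ Fin.castSucc)).det := by
  have hrow : (M.updateRow (Fin.last (k + 1)) (Pi.single (Fin.last (k + 1)) b)).submatrix
      Fin.succ Fin.succ = (M.submatrix Fin.succ Fin.succ).updateRow (Fin.last k)
        (Pi.single (Fin.last k) b) := by
    ext r c
    simp [updateRow_apply, Pi.single_apply, ← Fin.succ_last]
  rw [updateRow_comm _ (Fin.last_pos).ne, det_updateRow_single, Fin.succAbove_zero, hrow,
    det_updateRow_single, Fin.succAbove_last, submatrix_submatrix]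
  simp only [Fin.val_zero, pow_zero, ← two_mul, pow_mul, neg_one_sq, one_pow]
  ring

theorem det_mul_det_mul_det_submatrix_succ_castSucc (M : Matrix (Fin (k + 2)) (Fin (k + 2)) R) :
    M.det * (M.det * (M.submatrix (Fin.succ ∘ Fin.castSucc) (Fin.succ ∘ Fin.castSucc)).det)
      = M.det * (adjugate M 0 0 * adjugate M (Fin.last _) (Fin.last _)
          - adjugate M 0 (Fin.last _) * adjugate M (Fin.last _) 0) := by
  have h := det_updateRow_vecMul_updateRow_vecMul M (Fin.last_pos (n := k)).ne
    (adjugate M 0) (adjugate M (Fin.last _))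
  rw [adjugate_vecMul_self, adjugate_vecMul_self, det_updateRow_zero_updateRow_last_single] at h
  linear_combination h

theorem det_mul_det_submatrix_succ_castSucc_eq_adjugate
    (M : Matrix (Fin (k + 2)) (Fin (k + 2)) R) :
    M.det * (M.submatrix (Fin.succ ∘ Fin.castSucc) (Fin.succ ∘ Fin.castSucc)).det
      = adjugate M 0 0 * adjugate M (Fin.last _) (Fin.last _)
          - adjugate M 0 (Fin.last _) * adjugate M (Fin.last _) 0 := by
  -- cancel `det X` for the generic matrix `X` over the domain `ℤ[X_ij]`, then specialise to `M`
  let X := mvPolynomialX (Fin (k + 2)) (Fin (k + 2)) ℤ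
  have hX := mul_left_cancel₀ (det_mvPolynomialX_ne_zero _ ℤ)
    (det_mul_det_mul_det_submatrix_succ_castSucc X)
  let φ := MvPolynomial.eval₂Hom (Int.castRingHom R)
    fun p : Fin (k + 2) × Fin (k + 2) => M p.1 p.2
  have hφ : X.map φ = M := mvPolynomialX_map_eval₂ _ M
  have hadj (i j) : φ (adjugate X i j) = adjugate M i j := by
    rw [← hφ, ← RingHom.mapMatrix_apply, ← RingHom.map_adjugate]; rfl
  simpa [RingHom.map_det, hadj, RingHom.mapMatrix_apply, ← submatrix_map, hφ]
    using congrArg φ hX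

/-- The Desnanot–Jacobi identity (Dodgson condensation). -/
theorem det_mul_det_submatrix_succ_castSucc (M : Matrix (Fin (k + 2)) (Fin (k + 2)) R) :
    M.det * (M.submatrix (Fin.succ ∘ Fin.castSucc) (Fin.succ ∘ Fin.castSucc)).det
      = (M.submatrix Fin.succ Fin.succ).det * (M.submatrix Fin.castSucc Fin.castSucc).det
        - (M.submatrix Fin.castSucc Fin.succ).det * (M.submatrix Fin.succ Fin.castSucc).det := by
  have hsign : ((-1 : R) ^ (k + 1)) ^ 2 = 1 := by rw [pow_right_comm, neg_one_sq, one_pow]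
  rw [det_mul_det_submatrix_succ_castSucc_eq_adjugate]
  simp only [adjugate_fin_succ_eq_det_submatrix, Fin.succAbove_zero, Fin.succAbove_last,
    Fin.val_zero, Fin.val_last, add_zero, zero_add, pow_zero, ← two_mul, pow_mul, neg_one_sq,
    one_pow]
  linear_combination (-(M.submatrix Fin.castSucc Fin.succ).det
    * (M.submatrix Fin.succ Fin.castSucc).det) * hsign

end Fin

def hankel {α : Type*} (a : ℕ → α) (n m : ℕ) : Matrix (Fin n) (Fin n) α :=
  of fun i j => a (i + j + m)

theorem hankel_submatrix {α : Type*} (a : ℕ → α) (m : ℕ) {k n : ℕ} (f g : Fin k → Fin n)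
    (p q : ℕ) (hf : ∀ i, (f i : ℕ) = i + p) (hg : ∀ j, (g j : ℕ) = j + q) :
    (hankel a n m).submatrix f g = hankel a k (m + (p + q)) := by
  ext i j
  simp only [hankel, submatrix_apply, of_apply, hf, hg]
  congr 1
  ring

theorem det_hankel_recurrence (a : ℕ → R) (k m : ℕ) :
    (hankel a (k + 2) m).det * (hankel a k (m + 2)).det
      = (hankel a (k + 1) (m + 2)).det * (hankel a (k + 1) m).det
        - (hankel a (k + 1) (m + 1)).det ^ 2 := by
  have h := det_mul_det_submatrix_succ_castSucc (hankel a (k + 2) m)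
  rw [hankel_submatrix a m (Fin.succ ∘ Fin.castSucc) _ 1 1 (fun _ => rfl) (fun _ => rfl),
    hankel_submatrix a m Fin.succ Fin.succ 1 1 (fun _ => rfl) (fun _ => rfl),
    hankel_submatrix a m Fin.castSucc Fin.castSucc 0 0 (fun _ => rfl) (fun _ => rfl),
    hankel_submatrix a m Fin.castSucc Fin.succ 0 1 (fun _ => rfl) (fun _ => rfl),
    hankel_submatrix a m Fin.succ Fin.castSucc 1 0 (fun _ => rfl) (fun _ => rfl)] at h
  simpa only [Nat.reduceAdd, add_zero, sq] using h

end Matrix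

open Nat

def catalanHankelFactor (n j : ℕ) : ℚ := ∏ i ∈ Icc 1 j, (2 * n + i + j : ℚ) / (i + j)

def catalanHankelProd (n m : ℕ) : ℚ := ∏ j ∈ Icc 1 (m - 1), catalanHankelFactor n j

theorem prod_Icc_natCast_add_eq_factorial_div (a b : ℕ) :
    ∏ i ∈ Icc 1 b, ((a + i : ℕ) : ℚ) = (a + b)! / a ! := by
  rw [eq_div_iff (by positivity)]
  induction b with
  | zero => simp
  | succ b ih =>
    rw [prod_Icc_succ_top (by omega), mul_right_comm, ih, ← add_assoc, factorial_succ]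
    push_cast
    ring

theorem catalanHankelFactor_eq (n j : ℕ) :
    catalanHankelFactor n j = (2 * n + 2 * j)! * j ! / ((2 * n + j)! * (2 * j)!) := by
  have hnum := prod_Icc_natCast_add_eq_factorial_div (2 * n + j) j
  have hden := prod_Icc_natCast_add_eq_factorial_div j j
  rw [show 2 * n + j + j = 2 * n + 2 * j by ring] at hnum
  rw [← two_mul] at hden
  calc catalanHankelFactor n j
      = ((2 * n + 2 * j)! / (2 * n + j)!) / ((2 * j)! / j !) := by
        rw [catalanHankelFactor, prod_div_distrib, ← hnum, ← hden]
        congr 1 <;> exact prod_congr rfl fun i _ => by push_cast; ring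
    _ = _ := by field_simp

theorem catalanHankelFactor_pos (n j : ℕ) : 0 < catalanHankelFactor n j := by
  rw [catalanHankelFactor_eq]; positivity

theorem catalanHankelFactor_zero_left (j : ℕ) : catalanHankelFactor 0 j = 1 := by
  rw [catalanHankelFactor_eq, mul_zero, zero_add, zero_add, mul_comm, div_self (by positivity)]

theorem catalanHankelFactor_succ_left (n j : ℕ) :
    catalanHankelFactor (n + 1) j = catalanHankelFactor n j
      * ((2 * n + 2 * j + 1) * (2 * n + 2 * j + 2)) / ((2 * n + j + 1) * (2 * n + j + 2)) := by
  rw [catalanHankelFactor_eq, catalanHankelFactor_eq,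
    show 2 * (n + 1) + 2 * j = 2 * n + 2 * j + 1 + 1 by ring,
    show 2 * (n + 1) + j = 2 * n + j + 1 + 1 by ring]
  simp only [factorial_succ]
  push_cast
  field_simp
  ring

theorem catalanHankelFactor_succ_right (n j : ℕ) :
    catalanHankelFactor n (j + 1) = catalanHankelFactor n j
      * ((2 * n + 2 * j + 1) * (2 * n + 2 * j + 2) * (j + 1))
        / ((2 * n + j + 1) * (2 * j + 1) * (2 * j + 2)) := by
  rw [catalanHankelFactor_eq, catalanHankelFactor_eq,
    show 2 * n + 2 * (j + 1) = 2 * n + 2 * j + 1 + 1 by ring,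
    show 2 * n + (j + 1) = 2 * n + j + 1 by ring,
    show 2 * (j + 1) = 2 * j + 1 + 1 by ring]
  simp only [factorial_succ]
  push_cast
  field_simp
  ring

theorem catalanHankelProd_pos (n m : ℕ) : 0 < catalanHankelProd n m :=
  prod_pos fun j _ => catalanHankelFactor_pos n j

theorem catalanHankelProd_zero_left (m : ℕ) : catalanHankelProd 0 m = 1 :=
  prod_eq_one fun j _ => catalanHankelFactor_zero_left j

theorem catalanHankelProd_zero_right (n : ℕ) : catalanHankelProd n 0 = 1 := rfl

theorem catalanHankelProd_succ_right (n m : ℕ) :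
    catalanHankelProd n (m + 1) = catalanHankelProd n m * catalanHankelFactor n m := by
  cases m with
  | zero => simp [catalanHankelProd, catalanHankelFactor]
  | succ m => exact prod_Icc_succ_top (by omega) _

theorem catalan_succ_mul (m : ℕ) :
    (catalan (m + 1) : ℚ) * ((m + 1) * (m + 2)) = catalan m * ((2 * m + 1) * (2 * m + 2)) := by
  have h₁ := succ_mul_catalan_eq_centralBinom (m + 1)
  have h₂ := succ_mul_centralBinom_succ m
  have h₃ := succ_mul_catalan_eq_centralBinom m
  qify at h₁ h₂ h₃
  linear_combination (m + 1 : ℚ) * h₁ + h₂ - 2 * (2 * m + 1 : ℚ) * h₃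

theorem catalanHankelProd_one_left (m : ℕ) : catalanHankelProd 1 m = catalan m := by
  induction m with
  | zero => simp [catalanHankelProd]
  | succ m ih =>
    rw [catalanHankelProd_succ_right, ih, catalanHankelFactor_succ_left,
      catalanHankelFactor_zero_left, mul_div_assoc', div_eq_iff (by positivity)]
    push_cast
    linear_combination -catalan_succ_mul m

theorem catalanHankelProd_add_two_mul (n m : ℕ) :
    catalanHankelProd (n + 2) m * catalanHankelProd n m = catalanHankelProd (n + 1) m ^ 2
      * ((2 * n + 2 * m + 1) * (2 * n + 2 * m + 2) * (2 * n + 2) * (2 * n + 3))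
        / ((2 * n + m + 1) * (2 * n + m + 2) ^ 2 * (2 * n + m + 3)) := by
  induction m with
  | zero =>
    simp only [catalanHankelProd_zero_right]
    field_simp
    ring
  | succ m ih =>
    simp only [catalanHankelProd_succ_right]
    rw [mul_mul_mul_comm, ih, catalanHankelFactor_succ_left (n + 1),
      catalanHankelFactor_succ_left n]
    push_cast
    field_simp
    ring

theorem catalanHankelProd_recurrence (n m : ℕ) :
    catalanHankelProd (n + 2) m * catalanHankelProd n (m + 2)
      = catalanHankelProd (n + 1) (m + 2) * catalanHankelProd (n + 1) m
        - catalanHankelProd (n + 1) (m + 1) ^ 2 := by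
  have hF := (catalanHankelProd_pos n m).ne'
  rw [eq_div_of_mul_eq hF (catalanHankelProd_add_two_mul n m)]
  simp only [catalanHankelProd_succ_right]
  rw [catalanHankelFactor_succ_right n m, catalanHankelFactor_succ_right (n + 1) m,
    catalanHankelFactor_succ_left n m]
  push_cast
  field_simp
  ring

open Matrix in
theorem det_hankel_catalan :
    ∀ n m : ℕ, (hankel (fun k => (catalan k : ℚ)) n m).det = catalanHankelProd n m
  | 0, m => by simp [catalanHankelProd_zero_left]
  | 1, m => by simp [hankel, catalanHankelProd_one_left]
  | k + 2, m => by
    have h := det_hankel_recurrence (fun k => (catalan k : ℚ)) k m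
    rw [det_hankel_catalan (k + 1), det_hankel_catalan (k + 1), det_hankel_catalan (k + 1),
      det_hankel_catalan k, ← catalanHankelProd_recurrence] at h
    exact mul_right_cancel₀ (catalanHankelProd_pos k (m + 2)).ne' h

theorem stmt_10_general (m n : ℕ) :
    Matrix.det (Matrix.of (fun i j : Fin n => (catalan (i.1 + j.1 + m) : ℚ)))
      = ∏ j ∈ Finset.Icc 1 (m - 1), ∏ i ∈ Finset.Icc 1 j,
          ((2 * n + i + j : ℚ) / (i + j : ℚ)) :=
  det_hankel_catalan n m

theorem stmt_10 (m n : ℕ) (hm : 1 ≤ m) (hn : 1 ≤ n) :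
    Matrix.det (Matrix.of (fun i j : Fin n => (catalan (i.1 + j.1 + m) : ℚ)))
      = ∏ j ∈ Finset.Icc 1 (m - 1), ∏ i ∈ Finset.Icc 1 j,
          ((2 * n + i + j : ℚ) / (i + j : ℚ)) :=
  stmt_10_general m n
end

section
/- Let q be an element of a field with q not a root of unity (or treat q as an indeterminate over ℚ), let a, b be field elements, and define c(n) = (b;q)_n / (a;q)_n where (x;q)_n = ∏_{j=0}^{n-1}(1 - q^j x), assuming all denominators are nonzero. Then det((c(i+j))_{i,j=0}^{n-1}) = q^{2·binom(n,3)} · ∏_{k=1}^{n-1} [ (b;q)_k · (q;q)_k · ∏_{j=0}^{k-1}(b - q^j a) ] / [ (q^{k-1}a; q)_k · (a;q)_{2k} ]. -/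
/-- The q-Pochhammer symbol `(x; q)_n = ∏_{j=0}^{n-1} (1 - q^j x)`. -/
def qPoch {F : Type*} [Field F] (q x : F) (n : ℕ) : F :=
  ∏ j ∈ Finset.range n, (1 - q ^ j * x)

/-!
For `i, j ≤ m`, splitting `(b;q)_{i+j} = (b;q)_i (q^i b;q)_j` and
`(a;q)_{m+i} = (a;q)_{i+j} (q^{i+j} a;q)_{m-j}` writes the entry `c(i+j)` as the row factor
`(b;q)_i / (a;q)_{m+i}` times `P_j(q^i)`, where
`P_j = ∏_{t<j} (1 - q^t b X) ∏_{j≤t<m} (1 - q^t a X)`.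
The determinant of `(P_j(x_i))` is the Vandermonde determinant of the `x_i` times the determinant
of the coefficient matrix of the `P_j`. With arbitrary `α_t, β_t` in place of `q^t a, q^t b`, the
latter becomes triangular after subtracting neighbouring columns, since `P_{j+1} - P_j` is
`(α_j - β_j) X` times a polynomial of the same shape and one degree less.
-/

open Finset Polynomial

theorem prod_Icc_one_eq_prod_range {M : Type*} [CommMonoid M] (f : ℕ → M) (m : ℕ) :
    ∏ k ∈ Icc 1 m, f k = ∏ k ∈ range m, f (k + 1) := by
  rw [← Ico_add_one_right_eq_Icc, range_eq_Ico, prod_Ico_add']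

theorem prod_fin_prod_Ioi_eq_prod_range_prod_range {M : Type*} [CommMonoid M] (n : ℕ)
    (f : ℕ → ℕ → M) :
    ∏ i : Fin n, ∏ j ∈ Ioi i, f i j = ∏ j ∈ range n, ∏ i ∈ range j, f i j := by
  have hinner : ∀ i : Fin n, ∏ j ∈ Ioi i, f i j = ∏ j ∈ Ioo (i : ℕ) n, f i j := fun i => by
    rw [← Fin.map_valEmbedding_Ioi, prod_map]
    rfl
  rw [prod_congr rfl fun i _ => hinner i,
    Fin.prod_univ_eq_prod_range (fun i => ∏ j ∈ Ioo i n, f i j)]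
  exact prod_comm' fun i j => by simp only [mem_range, mem_Ioo]; omega

theorem sum_range_succ_choose_two (m : ℕ) :
    ∑ k ∈ range m, (k + 1).choose 2 = (m + 1).choose 3 := by
  induction m with
  | zero => rfl
  | succ m ih => rw [sum_range_succ, ih, Nat.choose_succ_succ' (m + 1) 2, add_comm]

section MixedLinearProd

variable {R : Type*} [CommRing R]

noncomputable def mixedLinearProd (α β : ℕ → R) (d j : ℕ) : R[X] :=
  (∏ t ∈ range j, (1 - C (β t) * X)) * ∏ t ∈ Ico j d, (1 - C (α t) * X)

theorem natDegree_mixedLinearProd_le (α β : ℕ → R) {d j : ℕ} (hj : j ≤ d) :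
    (mixedLinearProd α β d j).natDegree ≤ d := by
  have hlin : ∀ c : R, (1 - C c * X).natDegree ≤ 1 := fun c => by compute_degree
  have hprod : ∀ (s : Finset ℕ) (γ : ℕ → R), (∏ t ∈ s, (1 - C (γ t) * X)).natDegree ≤ #s :=
    fun s γ => (natDegree_prod_le _ _).trans <| by simpa using sum_le_sum fun t _ => hlin (γ t)
  calc (mixedLinearProd α β d j).natDegree ≤ #(range j) + #(Ico j d) :=
        natDegree_mul_le.trans (add_le_add (hprod _ _) (hprod _ _))
    _ = d := by simp; omega

theorem coeff_zero_mixedLinearProd (α β : ℕ → R) (d j : ℕ) :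
    (mixedLinearProd α β d j).coeff 0 = 1 := by
  simp [coeff_zero_eq_eval_zero, mixedLinearProd, eval_prod]

theorem eval_mixedLinearProd (α β : ℕ → R) (d j : ℕ) (x : R) :
    (mixedLinearProd α β d j).eval x
      = (∏ t ∈ range j, (1 - β t * x)) * ∏ t ∈ Ico j d, (1 - α t * x) := by
  simp [mixedLinearProd, eval_prod]

theorem mixedLinearProd_succ_sub (α β : ℕ → R) {d j : ℕ} (hj : j ≤ d) :
    mixedLinearProd α β (d + 1) (j + 1) - mixedLinearProd α β (d + 1) j
      = C (α j - β j) * (X * mixedLinearProd (fun t => α (t + 1)) β d j) := by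
  have hshift : ∏ t ∈ Ico (j + 1) (d + 1), (1 - C (α t) * X)
      = ∏ t ∈ Ico j d, (1 - C (α (t + 1)) * X) :=
    (prod_Ico_add' (fun t => 1 - C (α t) * X) j d 1).symm
  rw [mixedLinearProd, mixedLinearProd, mixedLinearProd, prod_range_succ,
    prod_eq_prod_Ico_succ_bot (by omega : j < d + 1), hshift, C_sub]
  ring

theorem det_coeff_mixedLinearProd_succ (α β : ℕ → R) (d : ℕ) :
    (Matrix.of fun k j : Fin (d + 2) => (mixedLinearProd α β (d + 1) j).coeff k).det
      = (∏ j : Fin (d + 1), (α j - β j)) *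
        (Matrix.of fun k j : Fin (d + 1) =>
          (mixedLinearProd (fun t => α (t + 1)) β d j).coeff k).det := by
  set P' := mixedLinearProd (fun t => α (t + 1)) β d
  -- subtracting from each column its left neighbour leaves `(α j - β j) X P'_j` in column `j + 1`
  let B : Matrix (Fin (d + 2)) (Fin (d + 2)) R := Matrix.of fun k j =>
    Fin.cases ((mixedLinearProd α β (d + 1) 0).coeff k)
      (fun j : Fin (d + 1) => (α j - β j) * (X * P' j).coeff k) j
  have hB : (Matrix.of fun k j : Fin (d + 2) => (mixedLinearProd α β (d + 1) j).coeff k).det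
      = B.det := by
    refine Matrix.det_eq_of_forall_col_eq_smul_add_pred (fun _ => 1) (fun _ => rfl) fun k j => ?_
    have hsub := mixedLinearProd_succ_sub α β (Nat.le_of_lt_succ j.2)
    simp only [Matrix.of_apply, Fin.val_succ, Fin.val_castSucc, B, Fin.cases_succ, one_mul]
    rw [← coeff_C_mul, ← coeff_add, ← hsub, sub_add_cancel]
  rw [hB, Matrix.det_succ_row_zero, Fin.sum_univ_succ,
    sum_eq_zero fun j _ => by simp [B]]
  simp only [Matrix.of_apply, Fin.cases_zero, coeff_zero_mixedLinearProd, B, Fin.val_zero,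
    pow_zero, one_mul, add_zero]
  rw [← Matrix.det_mul_row]
  congr 1
  ext k j
  simp [coeff_X_mul]

theorem det_coeff_mixedLinearProd (d : ℕ) (α β : ℕ → R) :
    (Matrix.of fun k j : Fin (d + 1) => (mixedLinearProd α β d j).coeff k).det
      = ∏ t ∈ range d, ∏ s ∈ range (t + 1), (α t - β s) := by
  induction d generalizing α with
  | zero => simp [coeff_zero_mixedLinearProd]
  | succ d ih =>
    rw [det_coeff_mixedLinearProd_succ, ih, Fin.prod_univ_eq_prod_range (fun j => α j - β j),
      prod_range_succ' _ d, prod_range_succ' _ d]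
    simp only [prod_range_succ _ (_ + 1), prod_mul_distrib, zero_add, prod_range_one]
    ring

theorem det_eval_mixedLinearProd (α β : ℕ → R) (d : ℕ) (x : Fin (d + 1) → R) :
    (Matrix.of fun i j : Fin (d + 1) => (mixedLinearProd α β d j).eval (x i)).det
      = (∏ i, ∏ j ∈ Ioi i, (x j - x i)) * ∏ t ∈ range d, ∏ s ∈ range (t + 1), (α t - β s) := by
  have hfac : (Matrix.of fun i j : Fin (d + 1) => (mixedLinearProd α β d j).eval (x i))
      = Matrix.vandermonde x *
        Matrix.of fun k j : Fin (d + 1) => (mixedLinearProd α β d j).coeff k := by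
    ext i j
    rw [Matrix.of_apply, eval_eq_sum_range' (Nat.lt_succ_of_le
      (natDegree_mixedLinearProd_le α β (Nat.le_of_lt_succ j.2))), ← Fin.sum_univ_eq_sum_range]
    simp [Matrix.mul_apply, mul_comm]
  rw [hfac, Matrix.det_mul, Matrix.det_vandermonde, det_coeff_mixedLinearProd]

end MixedLinearProd

section QPochhammer

variable {F : Type*} [Field F]

theorem qPoch_zero (q x : F) : qPoch q x 0 = 1 := prod_range_zero _

theorem qPoch_succ (q x : F) (n : ℕ) : qPoch q x (n + 1) = qPoch q x n * (1 - q ^ n * x) :=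
  prod_range_succ _ _

theorem qPoch_add (q x : F) (s t : ℕ) :
    qPoch q x (s + t) = qPoch q x s * qPoch q (q ^ s * x) t := by
  rw [qPoch, qPoch, qPoch, prod_range_add]
  simp only [pow_add, mul_comm (q ^ s), mul_assoc]

theorem qPoch_div_qPoch_eq_mul_eval_mixedLinearProd (q a b : F) {m i j : ℕ} (hj : j ≤ m)
    (ha : qPoch q a (m + i) ≠ 0) :
    qPoch q b (i + j) / qPoch q a (i + j)
      = qPoch q b i / qPoch q a (m + i) *
        (mixedLinearProd (fun t => q ^ t * a) (fun t => q ^ t * b) m j).eval (q ^ i) := by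
  have hb : qPoch q b (i + j) = qPoch q b i * ∏ t ∈ range j, (1 - q ^ t * b * q ^ i) := by
    rw [qPoch_add, qPoch]
    exact congrArg _ (prod_congr rfl fun t _ => by ring)
  have ha' : qPoch q a (m + i) = qPoch q a (i + j) * ∏ t ∈ Ico j m, (1 - q ^ t * a * q ^ i) := by
    rw [show m + i = i + j + (m - j) by omega, qPoch_add, qPoch, prod_Ico_eq_prod_range]
    exact congrArg _ (prod_congr rfl fun t _ => by ring)
  rw [eval_mixedLinearProd, hb, ha', div_mul_eq_mul_div, ← mul_assoc,
    mul_div_mul_right _ _ (right_ne_zero_of_mul (ha' ▸ ha))]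

theorem det_qPoch_div_qPoch (q a b : F) (ha : ∀ k, qPoch q a k ≠ 0) (m : ℕ) :
    (Matrix.of fun i j : Fin (m + 1) => qPoch q b (i + j) / qPoch q a (i + j)).det
      = (∏ i : Fin (m + 1), qPoch q b i / qPoch q a (m + i)) *
        ((∏ i : Fin (m + 1), ∏ j ∈ Ioi i, (q ^ (j : ℕ) - q ^ (i : ℕ))) *
          ∏ t ∈ range m, ∏ s ∈ range (t + 1), (q ^ t * a - q ^ s * b)) := by
  rw [← det_eval_mixedLinearProd (fun t => q ^ t * a) (fun t => q ^ t * b) m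
    (fun i => q ^ (i : ℕ)), ← Matrix.det_mul_column]
  congr 1
  ext i j
  exact qPoch_div_qPoch_eq_mul_eval_mixedLinearProd q a b (Nat.le_of_lt_succ j.2) (ha _)

theorem prod_range_pow_sub_mul_pow_sub (q a b : F) (k : ℕ) :
    ∏ s ∈ range (k + 1), ((q ^ (k + 1) - q ^ s) * (q ^ k * a - q ^ s * b))
      = q ^ (2 * (k + 1).choose 2) *
        (qPoch q q (k + 1) * ∏ s ∈ range (k + 1), (b - q ^ s * a)) := by
  have hfactor : ∀ s ∈ range (k + 1), (q ^ (k + 1) - q ^ s) * (q ^ k * a - q ^ s * b)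
      = (q ^ 2) ^ s * ((1 - q ^ (k - s) * q) * (b - q ^ (k - s) * a)) := fun s hs => by
    obtain ⟨r, rfl⟩ := Nat.exists_eq_add_of_le (Nat.le_of_lt_succ (mem_range.1 hs))
    rw [Nat.add_sub_cancel_left]
    ring
  have hreflect := prod_range_reflect (fun s => (1 - q ^ s * q) * (b - q ^ s * a)) (k + 1)
  rw [Nat.add_sub_cancel] at hreflect
  rw [prod_congr rfl hfactor, prod_mul_distrib, prod_pow_eq_pow_sum, sum_range_id,
    ← Nat.choose_two_right, ← pow_mul, hreflect, prod_mul_distrib, qPoch]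

-- Grouping the Vandermonde factors `q^j - q^i` by their larger index `j = k + 1` pairs them with
-- the factors `q^k a - q^s b`, and the signs cancel within each pair.
theorem prod_pow_sub_pow_mul_prod_pow_mul_sub (q a b : F) (m : ℕ) :
    (∏ i : Fin (m + 1), ∏ j ∈ Ioi i, (q ^ (j : ℕ) - q ^ (i : ℕ))) *
        ∏ t ∈ range m, ∏ s ∈ range (t + 1), (q ^ t * a - q ^ s * b)
      = q ^ (2 * (m + 1).choose 3) *
        ∏ k ∈ range m, (qPoch q q (k + 1) * ∏ s ∈ range (k + 1), (b - q ^ s * a)) := by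
  rw [prod_fin_prod_Ioi_eq_prod_range_prod_range (m + 1) fun i j => q ^ j - q ^ i,
    prod_range_succ', range_zero, prod_empty, mul_one, ← prod_mul_distrib]
  simp only [← prod_mul_distrib, prod_range_pow_sub_mul_pow_sub]
  rw [prod_mul_distrib, prod_pow_eq_pow_sum, ← mul_sum, sum_range_succ_choose_two]

theorem prod_range_qPoch_add (q a : F) (m : ℕ) :
    ∏ i ∈ range (m + 1), qPoch q a (m + i)
      = ∏ k ∈ range m, (qPoch q (q ^ k * a) (k + 1) * qPoch q a (2 * (k + 1))) := by
  induction m with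
  | zero => simp [qPoch_zero]
  | succ m ih =>
    have hshift : ∏ i ∈ range (m + 1), qPoch q a (m + 1 + i)
        = (∏ i ∈ range (m + 1), qPoch q a (m + i)) * qPoch q (q ^ m * a) (m + 1) := by
      have hsucc : ∀ i, qPoch q a (m + 1 + i) = qPoch q a (m + i) * (1 - q ^ i * (q ^ m * a)) :=
        fun i => by rw [add_right_comm, qPoch_succ, pow_add, mul_comm (q ^ m), mul_assoc]
      simp only [hsucc, prod_mul_distrib]
      rfl
    rw [prod_range_succ, hshift, ih, prod_range_succ, mul_assoc,
      show m + 1 + (m + 1) = 2 * (m + 1) by ring]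

end QPochhammer

theorem stmt_12_general {F : Type*} [Field F] (q a b : F)
    (ha : ∀ m : ℕ, qPoch q a m ≠ 0)
    (n : ℕ) :
    Matrix.det (Matrix.of (fun i j : Fin n =>
        qPoch q b (i.1 + j.1) / qPoch q a (i.1 + j.1)))
      = q ^ (2 * n.choose 3) *
          ∏ k ∈ Finset.Icc 1 (n - 1),
            (qPoch q b k * qPoch q q k * ∏ j ∈ Finset.range k, (b - q ^ j * a)) /
              (qPoch q (q ^ (k - 1) * a) k * qPoch q a (2 * k)) := by
  rcases n with _ | m
  · simp
  have hnum : ∏ i ∈ range (m + 1), qPoch q b i = ∏ k ∈ range m, qPoch q b (k + 1) := by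
    rw [prod_range_succ', qPoch_zero, mul_one]
  rw [det_qPoch_div_qPoch q a b ha m, prod_pow_sub_pow_mul_prod_pow_mul_sub,
    Fin.prod_univ_eq_prod_range (fun i => qPoch q b i / qPoch q a (m + i)), prod_div_distrib,
    prod_range_qPoch_add, hnum, Nat.add_sub_cancel, prod_Icc_one_eq_prod_range]
  simp only [Nat.add_sub_cancel, prod_div_distrib, prod_mul_distrib]
  ring

theorem stmt_12 {F : Type*} [Field F] (q a b : F)
    (hq : ∀ m : ℕ, 1 ≤ m → q ^ m ≠ 1)
    (ha : ∀ m : ℕ, qPoch q a m ≠ 0)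
    (hka : ∀ k : ℕ, 1 ≤ k → qPoch q (q ^ (k - 1) * a) k ≠ 0)
    (n : ℕ) :
    Matrix.det (Matrix.of (fun i j : Fin n =>
        qPoch q b (i.1 + j.1) / qPoch q a (i.1 + j.1)))
      = q ^ (2 * n.choose 3) *
          ∏ k ∈ Finset.Icc 1 (n - 1),
            (qPoch q b k * qPoch q q k * ∏ j ∈ Finset.range k, (b - q ^ j * a)) /
              (qPoch q (q ^ (k - 1) * a) k * qPoch q a (2 * k)) :=
  stmt_12_general q a b ha n
end

section
/- Let u(n) = ∏_{j=0}^{n-1}(b+jc) / ∏_{j=0}^{n-1}(a+jc) for real (or rational) parameters a, b, c with all a+jc ≠ 0. Then det((u(i+j))_{i,j=0}^{n-1}) = ∏_{k=1}^{n-1} [ k! · c^k · ∏_{j=0}^{k-1}(b+jc)(a-b+jc) ] / [ ∏_{j=0}^{k-1}(a+(j+k-1)c) · ∏_{j=0}^{2k-1}(a+jc) ]. -/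
/-!
Write `u m = (b)_m / (a)_m` with rising products of step `c`, so `u (m + 1) = r m * u m` for
`r m = (b + m c) / (a + m c)`. Replacing column `j + 1` of the Hankel matrix by itself minus `r j`
times column `j` clears the first row except for `u 0 = 1`, and the remaining entry
`u (i + j + 2) - r j * u (i + j + 1) = (r (i + j + 1) - r j) * u (i + j + 1)` factors as
`(i + 1) c (a - b) * b / (a (a + c) (a + j c))` times the `(i, j)` entry of the same Hankel matrix
for the parameters `(a + 2c, b + c)`. Pulling these row and column factors out of the determinant
gives a recursion in `n`, and the closed form satisfies it factor by factor.
-/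

open Finset Matrix

theorem det_hankel_succ {R : Type*} [CommRing R] (u r : ℕ → R)
    (hr : ∀ m, u (m + 1) = r m * u m) (n : ℕ) :
    det (of fun i j : Fin (n + 1) => u (i + j)) =
      u 0 * det (of fun i j : Fin n => u (i + j + 2) - r j * u (i + j + 1)) := by
  set B : Matrix (Fin (n + 1)) (Fin (n + 1)) R := of fun i j =>
    Fin.cases (u i) (fun j' : Fin n => u (i + j' + 1) - r j' * u (i + j')) j
  have hB : det (of fun i j : Fin (n + 1) => u (i + j)) = det B := by
    refine det_eq_of_forall_col_eq_smul_add_pred (fun j => r j) (fun i => by simp [B]) ?_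
    intro i j
    simp only [B, of_apply, Fin.cases_succ, Fin.val_succ, Fin.val_castSucc]
    ring_nf
  have hB0 : ∀ j : Fin (n + 1), j ≠ 0 → B 0 j = 0 := by
    intro j hj
    obtain ⟨j, rfl⟩ := Fin.eq_succ_of_ne_zero hj
    simp [B, hr]
  rw [hB, det_succ_row_zero, Fintype.sum_eq_single 0 fun j hj => by rw [hB0 j hj]; ring]
  simp only [Fin.val_zero, pow_zero, one_mul, Fin.succAbove_zero]
  congr 2
  ext i j
  simp only [B, submatrix_apply, of_apply, Fin.cases_succ, Fin.val_succ]
  ring_nf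

theorem prod_Icc_one_sub_one_eq_prod_range {M : Type*} [CommMonoid M] (f : ℕ → M) (hf : f 0 = 1)
    (n : ℕ) : ∏ k ∈ Icc 1 (n - 1), f k = ∏ k ∈ range n, f k := by
  rcases n with _ | n
  · simp
  · rw [prod_range_succ', hf, mul_one, Nat.add_sub_cancel, ← Ico_add_one_right_eq_Icc,
      prod_Ico_eq_prod_range, Nat.add_sub_cancel]
    simp only [add_comm 1]

namespace PochhammerHankel

variable {K : Type*} [Field K]

def poch (x c : K) (m : ℕ) : K := ∏ j ∈ range m, (x + j * c)

@[simp]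
theorem poch_zero (x c : K) : poch x c 0 = 1 := prod_range_zero _

theorem poch_succ (x c : K) (m : ℕ) : poch x c (m + 1) = poch x c m * (x + m * c) :=
  prod_range_succ _ _

theorem poch_succ' (x c : K) (m : ℕ) : poch x c (m + 1) = x * poch (x + c) c m := by
  rw [poch, prod_range_succ', mul_comm]
  simp only [poch, Nat.cast_zero, zero_mul, add_zero, Nat.cast_succ]
  congr 1
  exact prod_congr rfl fun j _ => by ring

theorem poch_add_two (x c : K) (m : ℕ) :
    poch x c (m + 2) = x * (x + c) * poch (x + 2 * c) c m := by
  rw [poch_succ', poch_succ', mul_assoc, add_assoc, ← two_mul]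

def pochRatio (a b c : K) (m : ℕ) : K := poch b c m / poch a c m

theorem pochRatio_succ (a b c : K) (m : ℕ) :
    pochRatio a b c (m + 1) = (b + m * c) / (a + m * c) * pochRatio a b c m := by
  rw [pochRatio, pochRatio, poch_succ, poch_succ, mul_comm (poch b c m), mul_comm (poch a c m),
    mul_div_mul_comm]

theorem pochRatio_succ_div (a b c : K) (m : ℕ) :
    pochRatio a b c (m + 1) / (a + (m + 1) * c) =
      b / (a * (a + c)) * pochRatio (a + 2 * c) (b + c) c m := by
  rw [pochRatio, div_div, ← Nat.cast_succ, ← poch_succ, poch_add_two, poch_succ', pochRatio,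
    mul_div_mul_comm]

theorem pochRatio_add_two_sub {a c : K} (h : ∀ j : ℕ, a + j * c ≠ 0) (b : K) (i j : ℕ) :
    pochRatio a b c (i + j + 2) - (b + j * c) / (a + j * c) * pochRatio a b c (i + j + 1) =
      (i + 1) * c * (a - b) * (b / (a * (a + c) * (a + j * c))) *
        pochRatio (a + 2 * c) (b + c) c (i + j) := by
  have hj := h j
  have hs : a + ((i + j : ℕ) + 1) * c ≠ 0 := by exact_mod_cast h (i + j + 1)
  calc pochRatio a b c (i + j + 2) - (b + j * c) / (a + j * c) * pochRatio a b c (i + j + 1)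
      = ((b + ((i + j : ℕ) + 1) * c) / (a + ((i + j : ℕ) + 1) * c) -
          (b + j * c) / (a + j * c)) * pochRatio a b c (i + j + 1) := by
        rw [pochRatio_succ]; push_cast; ring
    _ = (i + 1) * c * (a - b) / (a + j * c) *
          (pochRatio a b c (i + j + 1) / (a + ((i + j : ℕ) + 1) * c)) := by
        rw [div_sub_div _ _ hs hj]
        field_simp
        push_cast
        ring
    _ = _ := by rw [pochRatio_succ_div]; field_simp

theorem det_hankel_pochRatio_succ {a c : K} (h : ∀ j : ℕ, a + j * c ≠ 0) (b : K) (n : ℕ) :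
    det (of fun i j : Fin (n + 1) => pochRatio a b c (i + j)) =
      (∏ k ∈ range n, (k + 1) * c * (a - b) * (b / (a * (a + c) * (a + k * c)))) *
        det (of fun i j : Fin n => pochRatio (a + 2 * c) (b + c) c (i + j)) := by
  rw [det_hankel_succ _ _ (pochRatio_succ a b c), pochRatio, poch_zero, poch_zero, div_one,
    one_mul]
  simp_rw [pochRatio_add_two_sub h]
  set M := of fun i j : Fin n => pochRatio (a + 2 * c) (b + c) c (i + j)
  let x : Fin n → K := fun i => (i + 1 : K) * c * (a - b)
  let y : Fin n → K := fun j => b / (a * (a + c) * (a + j * c))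
  calc _ = det (of fun i j => x i * (of fun i j => y j * M i j) i j) := by
        congr 1; ext i j; simp only [x, y, M, of_apply]; ring
    _ = _ := by
      rw [det_mul_column, det_mul_row, ← mul_assoc, ← prod_mul_distrib,
        Fin.prod_univ_eq_prod_range
          (fun k => (k + 1 : K) * c * (a - b) * (b / (a * (a + c) * (a + k * c))))]

def hankelFactor (a b c : K) (k : ℕ) : K :=
  k.factorial * c ^ k * (poch b c k * poch (a - b) c k) /
    (poch (a + (k - 1) * c) c k * poch a c (2 * k))

@[simp]
theorem hankelFactor_zero (a b c : K) : hankelFactor a b c 0 = 1 := by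
  simp [hankelFactor]

theorem hankelFactor_succ (a b c : K) (k : ℕ) :
    hankelFactor a b c (k + 1) =
      (k + 1) * c * (a - b) * (b / (a * (a + c) * (a + k * c))) *
        hankelFactor (a + 2 * c) (b + c) c k := by
  have hb : a + 2 * c - (b + c) = a - b + c := by ring
  have hk : a + 2 * c + (k - 1) * c = a + k * c + c := by ring
  rw [hankelFactor, hankelFactor, Nat.mul_succ, poch_add_two, poch_succ' b, poch_succ' (a - b),
    poch_succ', Nat.factorial_succ, hb, hk]
  push_cast
  rw [add_sub_cancel_right]
  simp only [div_eq_mul_inv, mul_inv]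
  ring

theorem det_hankel_pochRatio (n : ℕ) {a c : K} (h : ∀ j : ℕ, a + j * c ≠ 0) (b : K) :
    det (of fun i j : Fin n => pochRatio a b c (i + j)) =
      ∏ k ∈ range n, hankelFactor a b c k := by
  induction n generalizing a b with
  | zero => simp
  | succ n ih =>
    have h' : ∀ j : ℕ, a + 2 * c + j * c ≠ 0 := fun j => by
      convert h (j + 2) using 1; push_cast; ring
    rw [det_hankel_pochRatio_succ h, ih h', prod_range_succ', hankelFactor_zero, mul_one,
      ← prod_mul_distrib]
    simp only [hankelFactor_succ]

end PochhammerHankel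

open PochhammerHankel in
theorem stmt_14 (a b c : ℚ) (h : ∀ j : ℕ, a + j * c ≠ 0)
    (u : ℕ → ℚ)
    (hu : ∀ n : ℕ, u n = (∏ j ∈ Finset.range n, (b + j * c)) /
        (∏ j ∈ Finset.range n, (a + j * c)))
    (n : ℕ) :
    Matrix.det (Matrix.of (fun i j : Fin n => u (i.1 + j.1)))
      = ∏ k ∈ Finset.Icc 1 (n - 1),
          ((k.factorial : ℚ) * c ^ k *
              ∏ j ∈ Finset.range k, ((b + j * c) * (a - b + j * c))) /
            ((∏ j ∈ Finset.range k, (a + (j + k - 1 : ℕ) * c)) *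
              ∏ j ∈ Finset.range (2 * k), (a + j * c)) := by
  have hu' : u = pochRatio a b c := funext hu
  have hfactor : ∀ k : ℕ, k ∈ Icc 1 (n - 1) → ((k.factorial : ℚ) * c ^ k *
      ∏ j ∈ range k, ((b + j * c) * (a - b + j * c))) /
        ((∏ j ∈ range k, (a + (j + k - 1 : ℕ) * c)) * ∏ j ∈ range (2 * k), (a + j * c)) =
      hankelFactor a b c k := by
    intro k hk
    have hshift : ∏ j ∈ range k, (a + (j + k - 1 : ℕ) * c) = poch (a + (k - 1) * c) c k :=
      prod_congr rfl fun j _ => by rw [Nat.cast_sub (by grind)]; push_cast; ring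
    rw [hankelFactor, hshift, prod_mul_distrib]
    rfl
  rw [prod_congr rfl hfactor, prod_Icc_one_sub_one_eq_prod_range _ (hankelFactor_zero a b c), hu',
    det_hankel_pochRatio n h]
end

section
/- For all n ≥ 1 and m ≥ 0, det(([i+j+m]_q!)_{i,j=0}^{n-1}) = q^{2·binom(n,3) + (m+1)·binom(n,2)} · ∏_{k=0}^{n-1} [k+m]_q! · [k]_q!, where [k]_q = (1-q^k)/(1-q) and [k]_q! = ∏_{j=1}^{k}[j]_q, over the field ℚ(q) of rational functions. -/
/-- The q-integer `[k]_q = (1 - q^k)/(1 - q)` in `ℚ(q)`. -/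
noncomputable def qInt (k : ℕ) : RatFunc ℚ :=
  (1 - RatFunc.X ^ k) / (1 - RatFunc.X)

/-- The q-factorial `[k]_q! = ∏_{j=1}^{k} [j]_q`. -/
noncomputable def qFact (k : ℕ) : RatFunc ℚ :=
  ∏ j ∈ Finset.Icc 1 k, qInt j

/-!
Subtracting `[i + m]_q` times row `i - 1` from row `i` (bottom-up) turns the entry
`[i + j + m]_q!` into `q^(i + m) [j]_q [i + j + m - 1]_q!`, by `[a + b]_q = [a]_q + q^a [b]_q`.
The first column becomes `([m]_q!, 0, …, 0)`, and the remaining minor is the Hankel matrix for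
`n - 1` and `m + 1` with row `i` scaled by `q^(i + m + 1)` and column `j` by `[j + 1]_q`, which
gives a recursion in `n` for the determinant.
-/

open Finset Matrix

lemma qInt_zero : qInt 0 = 0 := by simp [qInt]

lemma qInt_add (a b : ℕ) : qInt (a + b) = qInt a + RatFunc.X ^ a * qInt b := by
  unfold qInt
  rw [← mul_div_assoc, ← add_div, pow_add]
  ring

lemma qFact_succ (k : ℕ) : qFact (k + 1) = qFact k * qInt (k + 1) :=
  prod_Icc_succ_top (Nat.le_add_left 1 k) _

lemma prod_qInt_succ (n : ℕ) : ∏ j : Fin n, qInt (j + 1) = qFact n := by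
  induction n with
  | zero => simp [qFact]
  | succ n ih => rw [Fin.prod_univ_castSucc, qFact_succ, ← ih]; rfl

lemma qFact_add_add_succ (i j m : ℕ) :
    qFact (i + j + m + 1)
      = qInt (i + m + 1) * qFact (i + j + m)
        + RatFunc.X ^ (i + m + 1) * qInt j * qFact (i + j + m) := by
  rw [qFact_succ, show i + j + m + 1 = i + m + 1 + j by omega, qInt_add]
  ring

lemma Matrix.det_succ_of_column_zero_eq_zero {R : Type*} [CommRing R] {n : ℕ}
    (A : Matrix (Fin (n + 1)) (Fin (n + 1)) R) (h : ∀ i : Fin n, A i.succ 0 = 0) :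
    A.det = A 0 0 * (A.submatrix Fin.succ Fin.succ).det := by
  simp [det_succ_column_zero A, Fin.sum_univ_succ, h]

lemma sum_range_add_succ (n m : ℕ) :
    ∑ i ∈ range n, (i + m + 1) = (n + 1).choose 2 + n * m := by
  induction n with
  | zero => simp
  | succ n ih =>
    rw [sum_range_succ, ih, Nat.choose_succ_succ' (n + 1), Nat.choose_one_right]
    ring

noncomputable def qHankel (n m : ℕ) : Matrix (Fin n) (Fin n) (RatFunc ℚ) :=
  of fun i j => qFact (i + j + m)

lemma det_qHankel_succ (n m : ℕ) :
    (qHankel (n + 1) m).det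
      = RatFunc.X ^ ((n + 1).choose 2 + n * m) * qFact m * qFact n * (qHankel n (m + 1)).det := by
  set B : Matrix (Fin (n + 1)) (Fin (n + 1)) (RatFunc ℚ) := of fun i j =>
    Fin.cases (qFact (j + m))
      (fun i' : Fin n => RatFunc.X ^ (i' + m + 1) * qInt j * qFact (i' + j + m)) i
    with hB
  have row_reduce : (qHankel (n + 1) m).det = B.det := by
    refine det_eq_of_forall_row_eq_smul_add_pred (fun i => qInt (i + m + 1))
      (fun j => by simp [hB, qHankel]) fun i j => ?_
    simp only [qHankel, hB, of_apply, Fin.cases_succ, Fin.val_succ, Fin.val_castSucc]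
    rw [show i.1 + 1 + j + m = i + j + m + 1 by omega, qFact_add_add_succ]
    ring
  have minor : B.submatrix Fin.succ Fin.succ = of fun i j =>
      RatFunc.X ^ (i.1 + m + 1) * of (fun i j => qInt (j.1 + 1) * qHankel n (m + 1) i j) i j := by
    ext i j
    simp only [hB, qHankel, submatrix_apply, of_apply, Fin.cases_succ, Fin.val_succ]
    rw [show i.1 + (j + 1) + m = i + j + (m + 1) by omega]
    ring
  have exponent : ∏ i : Fin n, (RatFunc.X : RatFunc ℚ) ^ (i.1 + m + 1)
      = RatFunc.X ^ ((n + 1).choose 2 + n * m) := by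
    rw [prod_pow_eq_pow_sum, Fin.sum_univ_eq_sum_range (fun i => i + m + 1), sum_range_add_succ]
  rw [row_reduce, det_succ_of_column_zero_eq_zero B (fun i => by simp [hB, qInt_zero]), minor,
    det_mul_column, det_mul_row (fun j : Fin n => qInt (j.1 + 1)), exponent, prod_qInt_succ]
  simp only [hB, of_apply, Fin.cases_zero, Fin.val_zero, zero_add]
  ring

theorem stmt_16_general (n m : ℕ) :
    Matrix.det (Matrix.of (fun i j : Fin n => qFact (i.1 + j.1 + m)))
      = RatFunc.X ^ (2 * n.choose 3 + (m + 1) * n.choose 2) *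
          ∏ k ∈ Finset.range n, qFact (k + m) * qFact k := by
  induction n generalizing m with
  | zero => simp
  | succ n ih =>
    change (qHankel (n + 1) m).det = _
    rw [det_qHankel_succ, show (qHankel n (m + 1)).det = _ from ih (m + 1), prod_mul_distrib,
      prod_mul_distrib, prod_range_succ' (fun k => qFact (k + m)), prod_range_succ qFact]
    have exponent : 2 * (n + 1).choose 3 + (m + 1) * (n + 1).choose 2
        = ((n + 1).choose 2 + n * m) + (2 * n.choose 3 + (m + 1 + 1) * n.choose 2) := by
      simp only [Nat.choose_succ_succ', Nat.choose_one_right]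
      ring
    simp only [exponent, pow_add, add_right_comm _ 1 m, add_assoc, zero_add]
    ring

theorem stmt_16 (n m : ℕ) (hn : 1 ≤ n) :
    Matrix.det (Matrix.of (fun i j : Fin n => qFact (i.1 + j.1 + m)))
      = RatFunc.X ^ (2 * n.choose 3 + (m + 1) * n.choose 2) *
          ∏ k ∈ Finset.range n, qFact (k + m) * qFact k :=
  stmt_16_general n m
end
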